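/- Let n = 1 (two variables). For every k ≥ 2, d ≥ 2 and every 0 ≤ j ≤ d−2, the Hilbert function of R = ℂ[x₀,x₁]/I_{1,k,d} satisfies HF(R; (k−1)d + j) = 1 + (k−1)(d−j) − k. In particular, the conjectured formula HF(R; i) = Σ_h N_h·( C(1 + (i−h)/k, 1) − C(1+j, 1) ) — the sum over integers h with 0 ≤ h < (k−1)(d−j) and i − h ∈ kℕ, where N_h = #{g ∈ (ℤ/kℤ)² : wt(g) = h} — holds for n = 1. -/

import Mathlib

open MvPolynomial

/-- The power ideal `I_{1,k,d} ⊆ ℂ[x₀,x₁]`, generated by the `k` forms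
`(x₀ + ξ^g x₁)^{(k−1)d}`, `g = 0,…,k−1`. -/
noncomputable def powerIdeal1 (k d : ℕ) (ξ : ℂ) :
    Ideal (MvPolynomial (Fin 2) ℂ) :=
  Ideal.span { p | ∃ g : ℕ, g < k ∧
    p = (X (0 : Fin 2) + C (ξ ^ g) * X (1 : Fin 2)) ^ ((k-1)*d) }

/-- The Hilbert function of `R = ℂ[x₀,x₁]/I_{1,k,d}` in degree `i`. -/
noncomputable def HF1 (k d : ℕ) (ξ : ℂ) (i : ℕ) : ℕ :=
  Module.finrank ℂ ↥(homogeneousSubmodule (Fin 2) ℂ i) -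
    Module.finrank ℂ ↥(Submodule.restrictScalars ℂ (powerIdeal1 k d ξ) ⊓
      homogeneousSubmodule (Fin 2) ℂ i)

/-- The weight of a vector `g ∈ (ℤ/kℤ)²`. -/
def wt {k : ℕ} (g : Fin 2 → ZMod k) : ℕ := ∑ l, (g l).val

/-- `N_h`, the number of vectors `g ∈ (ℤ/kℤ)²` of weight `h`. -/
noncomputable def Nw (k h : ℕ) [NeZero k] : ℕ :=
  (Finset.univ.filter (fun g : Fin 2 → ZMod k => wt g = h)).card

/-!
In degree `(k-1)d + j` the ideal is spanned by the `k(j+1)` forms `x₀^a x₁^(j-a) L_g^D`, where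
`L_g = x₀ + ξ^g x₁`, so the Hilbert function is `(k-1)d + j + 1 - k(j+1)` once these forms are
linearly independent. Setting `x₁ = 1` turns them into `X^a (X + ξ^g)^D`, whose span contains the
polynomials `X^β (X + ξ^g)^(N-β)`, `β ≤ j`, `N = D + j`. Under the apolarity pairing
`⟨f, h⟩ = ∑ f_t h_t / C(N, t)` these pair with `f` to nonzero multiples of the Hasse derivatives
of `f` at the points `ξ^(-g)`, and Hermite interpolation at these `k` points with multiplicity
`j + 1` (possible because `k(j+1) ≤ N + 1`) produces a dual family.

On the combinatorial side `N_h = min(h+1, 2k-1-h)`, so the conjectured sum has at most two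
nonzero terms, at the residue of `(k-1)(d-j)` modulo `k` and at that residue plus `k`.
-/

open scoped Polynomial
open Module

namespace Polynomial

theorem X_sub_C_pow_dvd_iff_hasseDeriv_eval {R : Type*} [CommRing R] {p : R[X]} {e : R}
    {n : ℕ} :
    (X - C e) ^ n ∣ p ↔ ∀ β < n, (hasseDeriv β p).eval e = 0 := by
  simp only [X_sub_C_pow_dvd_iff, X_pow_dvd_iff, ← taylor_apply, taylor_coeff]

variable {K ι : Type*} [Field K]

theorem finrank_degreeLT (n : ℕ) : finrank K (degreeLT K n) = n := by
  rw [(degreeLTEquiv K n).finrank_eq, finrank_fin_fun]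

noncomputable def hermiteEval (e : ι → K) (m n : ℕ) : degreeLT K n →ₗ[K] ι × Fin m → K :=
  LinearMap.pi (fun p => leval (e p.1) ∘ₗ hasseDeriv p.2) ∘ₗ (degreeLT K n).subtype

@[simp]
theorem hermiteEval_apply (e : ι → K) (m n : ℕ) (f : degreeLT K n) (p : ι × Fin m) :
    hermiteEval e m n f p = (hasseDeriv p.2 (f : K[X])).eval (e p.1) := rfl

theorem hermiteEval_surjective [Fintype ι] {e : ι → K} (he : Function.Injective e) (m : ℕ) :
    Function.Surjective (hermiteEval e m (Fintype.card ι * m)) := by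
  classical
  refine (LinearMap.injective_iff_surjective_of_finrank_eq_finrank
    (by simp [finrank_degreeLT])).mp ?_
  rw [← LinearMap.ker_eq_bot, LinearMap.ker_eq_bot']
  intro f hf
  have hdvd : ∏ g, (X - C (e g)) ^ m ∣ (f : K[X]) := by
    refine Fintype.prod_dvd_of_coprime (fun a b hab => ?_) fun g => ?_
    · exact (isCoprime_X_sub_C_of_isUnit_sub (sub_ne_zero.2 (he.ne hab)).isUnit).pow
    · exact X_sub_C_pow_dvd_iff_hasseDeriv_eval.2 fun β hβ => congr_fun hf (g, ⟨β, hβ⟩)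
  refine Subtype.ext (eq_zero_of_dvd_of_degree_lt hdvd ?_)
  simpa [degree_prod, degree_pow] using mem_degreeLT.1 f.2

noncomputable def apolar (N : ℕ) : K[X] →ₗ[K] K[X] →ₗ[K] K :=
  ∑ t ∈ Finset.range (N + 1),
    (N.choose t : K)⁻¹ • (LinearMap.mul K K).compl₁₂ (lcoeff K t) (lcoeff K t)

theorem apolar_apply (N : ℕ) (f h : K[X]) :
    apolar N f h = ∑ t ∈ Finset.range (N + 1), (N.choose t : K)⁻¹ * (f.coeff t * h.coeff t) := by
  simp [apolar]

theorem eval_hasseDeriv_eq_sum_range {R : Type*} [CommSemiring R] {f : R[X]} {N : ℕ}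
    (hf : f.natDegree ≤ N) (β : ℕ) (x : R) :
    (hasseDeriv β f).eval x =
      ∑ t ∈ Finset.range (N + 1), (t.choose β : R) * f.coeff t * x ^ (t - β) := by
  rw [hasseDeriv_apply, sum_over_range' _ (by simp) (N + 1) (by omega), eval_finsetSum]
  simp [eval_monomial]

theorem apolar_X_pow_mul_X_add_C_pow [CharZero K] {N β : ℕ} (hβ : β ≤ N) {c : K} (hc : c ≠ 0)
    {f : K[X]} (hf : f.natDegree ≤ N) :
    apolar N f (X ^ β * (X + C c) ^ (N - β)) =
      c ^ (N - β) / N.choose β * (hasseDeriv β f).eval c⁻¹ := by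
  rw [apolar_apply, eval_hasseDeriv_eq_sum_range hf, Finset.mul_sum]
  refine Finset.sum_congr rfl fun t ht => ?_
  rw [coeff_X_pow_mul', coeff_X_add_C_pow]
  split_ifs with hβt
  · obtain ⟨s, rfl⟩ := Nat.exists_eq_add_of_le hβt
    obtain ⟨r, rfl⟩ := Nat.exists_eq_add_of_le (Nat.lt_succ_iff.1 (Finset.mem_range.1 ht))
    have hchoose : ((β + s + r).choose (β + s) * (β + s).choose β : K) =
        (β + s + r).choose β * (s + r).choose s := by
      exact_mod_cast (Nat.choose_mul (Nat.le_add_right β s)).trans (by simp [Nat.add_assoc])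
    have h1 : ((β + s + r).choose (β + s) : K) ≠ 0 := by
      exact_mod_cast (Nat.choose_pos (by omega)).ne'
    have h2 : ((β + s + r).choose β : K) ≠ 0 := by exact_mod_cast (Nat.choose_pos (by omega)).ne'
    simp only [show β + s + r - β = s + r by omega, show β + s - β = s by omega,
      show s + r - s = r by omega]
    rw [inv_pow, pow_add]
    field_simp
    linear_combination -f.coeff (β + s) * hchoose
  · simp [Nat.choose_eq_zero_of_lt (not_le.1 hβt)]

theorem linearIndependent_X_pow_mul_X_add_C_pow_sub [CharZero K] [Fintype ι] {c : ι → K}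
    (hc : Function.Injective c) (hc0 : ∀ g, c g ≠ 0) {m N : ℕ}
    (hmN : Fintype.card ι * m ≤ N + 1) :
    LinearIndependent K
      fun p : ι × Fin m => (X : K[X]) ^ (p.2 : ℕ) * (X + C (c p.1)) ^ (N - p.2) := by
  classical
  rw [Fintype.linearIndependent_iff]
  intro a ha p
  have hm : m ≤ N + 1 := (Nat.le_mul_of_pos_left m (Fintype.card_pos_iff.2 ⟨p.1⟩)).trans hmN
  obtain ⟨f, hf⟩ := hermiteEval_surjective (e := fun g => (c g)⁻¹) (inv_injective.comp hc) m
    (Pi.single p 1)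
  have hfN : (f : K[X]).natDegree ≤ N := by
    rw [natDegree_le_iff_degree_le, ← mem_degreeLE, ← degreeLT_succ_eq_degreeLE]
    exact degreeLT_mono hmN f.2
  have hdual : ∀ q : ι × Fin m,
      apolar N f ((X : K[X]) ^ (q.2 : ℕ) * (X + C (c q.1)) ^ (N - q.2)) =
        c q.1 ^ (N - q.2) / N.choose q.2 * (Pi.single p (1 : K) : ι × Fin m → K) q := by
    intro q
    rw [apolar_X_pow_mul_X_add_C_pow (by omega) (hc0 _) hfN, ← hf]
    rfl
  have := congrArg (apolar N f) ha
  simp only [map_sum, map_smul, hdual, smul_eq_mul, map_zero] at this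
  have hp : (p.2 : ℕ) < m := p.2.2
  simpa [Pi.single_apply, hc0, Nat.choose_eq_zero_iff, show ¬ N < (p.2 : ℕ) by omega] using this

theorem mul_X_add_C_pow_mem_span (c : ι → K) (g : ι) {m D : ℕ} {q : K[X]}
    (hq : q.natDegree < m) :
    q * (X + C (c g)) ^ D ∈ Submodule.span K
      (Set.range fun p : ι × Fin m => (X : K[X]) ^ (p.2 : ℕ) * (X + C (c p.1)) ^ D) := by
  rw [q.as_sum_range' m hq, Finset.sum_mul]
  refine Submodule.sum_mem _ fun a ha => ?_
  rw [← C_mul_X_pow_eq_monomial, mul_assoc, ← smul_eq_C_mul]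
  exact Submodule.smul_mem _ _ (Submodule.subset_span ⟨(g, ⟨a, Finset.mem_range.1 ha⟩), rfl⟩)

theorem linearIndependent_X_pow_mul_X_add_C_pow [CharZero K] [Fintype ι] {c : ι → K}
    (hc : Function.Injective c) (hc0 : ∀ g, c g ≠ 0) {m D : ℕ}
    (hmD : Fintype.card ι * m ≤ D + m) :
    LinearIndependent K fun p : ι × Fin m => (X : K[X]) ^ (p.2 : ℕ) * (X + C (c p.1)) ^ D := by
  rcases Nat.eq_zero_or_pos m with rfl | hm
  · exact linearIndependent_empty_type
  have hu :=
    linearIndependent_X_pow_mul_X_add_C_pow_sub hc hc0 (m := m) (N := D + m - 1) (by omega)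
  rw [linearIndependent_iff_card_eq_finrank_span]
  refine le_antisymm ?_ (finrank_range_le_card _)
  rw [← finrank_span_eq_card hu, Set.finrank]
  have := FiniteDimensional.span_of_finite K (Set.finite_range
    fun p : ι × Fin m => (X : K[X]) ^ (p.2 : ℕ) * (X + C (c p.1)) ^ D)
  refine Submodule.finrank_mono (Submodule.span_le.2 ?_)
  rintro _ ⟨⟨g, β⟩, rfl⟩
  have hsplit : (X : K[X]) ^ (β : ℕ) * (X + C (c g)) ^ (D + m - 1 - β) =
      (X ^ (β : ℕ) * (X + C (c g)) ^ (m - 1 - β)) * (X + C (c g)) ^ D := by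
    rw [mul_assoc, ← pow_add]
    congr 2
    omega
  simp only [SetLike.mem_coe, hsplit]
  refine mul_X_add_C_pow_mem_span c g ?_
  calc _ ≤ (β : ℕ) + (m - 1 - β) := by compute_degree
    _ < m := by omega

end Polynomial

namespace MvPolynomial

variable {σ R ι : Type*} [CommSemiring R]

theorem finrank_homogeneousSubmodule {K : Type*} [Field K] [Fintype σ] (n : ℕ) :
    finrank K (homogeneousSubmodule σ K n) = (Fintype.card σ + n - 1).choose n := by
  classical
  have hs : {d : σ →₀ ℕ | d.degree = n} = ↑((Finset.univ : Finset σ).finsuppAntidiag n) := by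
    ext d
    simp [Finset.mem_finsuppAntidiag, Finsupp.degree_eq_sum]
  rw [homogeneousSubmodule_eq_finsupp_supported, hs,
    (AddMonoidAlgebra.supportedEquivFinsupp _).finrank_eq]
  simp [Finset.card_finsuppAntidiag_nat_eq_choose]

theorem finrank_homogeneousSubmodule_fin_two {K : Type*} [Field K] (n : ℕ) :
    finrank K (homogeneousSubmodule (Fin 2) K n) = n + 1 := by
  rw [finrank_homogeneousSubmodule, Fintype.card_fin, add_comm, Nat.add_succ_sub_one,
    Nat.choose_succ_self_right]

instance [Finite σ] (n : ℕ) : Module.Finite R (homogeneousSubmodule σ R n) :=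
  Module.Finite.iff_fg.2 (homogeneousSubmodule_fg σ R n)

theorem homogeneousComponent_add_mul {D : ℕ} {p : MvPolynomial σ R} (hp : p.IsHomogeneous D)
    (j : ℕ) (q : MvPolynomial σ R) :
    homogeneousComponent (j + D) (q * p) = homogeneousComponent j q * p := by
  conv_lhs => rw [← sum_homogeneousComponent q, Finset.sum_mul, map_sum]
  rw [Finset.sum_eq_single j]
  · exact homogeneousComponent_eq_self ((homogeneousComponent_isHomogeneous j q).mul hp)
  · intro i _ hij
    rw [homogeneousComponent_of_mem ((homogeneousComponent_isHomogeneous i q).mul hp),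
      if_neg (by omega)]
  · intro hj
    rw [homogeneousComponent_eq_zero _ q (by simpa using hj), zero_mul, map_zero]

variable [Fintype ι]

noncomputable def sumMulForms (p : ι → MvPolynomial σ R) (j : ℕ) :
    (ι → homogeneousSubmodule σ R j) →ₗ[R] MvPolynomial σ R :=
  ∑ g, LinearMap.mulRight R (p g) ∘ₗ (homogeneousSubmodule σ R j).subtype ∘ₗ LinearMap.proj g

@[simp]
theorem sumMulForms_apply (p : ι → MvPolynomial σ R) (j : ℕ)
    (q : ι → homogeneousSubmodule σ R j) :
    sumMulForms p j q = ∑ g, (q g : MvPolynomial σ R) * p g := by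
  simp [sumMulForms]

theorem sumMulForms_single [DecidableEq ι] (p : ι → MvPolynomial σ R) (j : ℕ) (g : ι)
    (q : homogeneousSubmodule σ R j) :
    sumMulForms p j (Pi.single g q) = q * p g := by
  rw [sumMulForms_apply, Fintype.sum_eq_single g fun x hx => by simp [hx]]
  simp

theorem span_inf_homogeneousSubmodule {p : ι → MvPolynomial σ R} {D : ℕ}
    (hp : ∀ g, (p g).IsHomogeneous D) (j : ℕ) :
    (Ideal.span (Set.range p)).restrictScalars R ⊓ homogeneousSubmodule σ R (j + D) =
      LinearMap.range (sumMulForms p j) := by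
  apply le_antisymm
  · rintro F ⟨hFI, hFH⟩
    obtain ⟨r, rfl⟩ := Ideal.mem_span_range_iff_exists_fun.1 hFI
    refine ⟨fun g => ⟨homogeneousComponent j (r g), homogeneousComponent_mem j _⟩, ?_⟩
    rw [sumMulForms_apply, ← homogeneousComponent_eq_self hFH, map_sum]
    exact Finset.sum_congr rfl fun g _ => (homogeneousComponent_add_mul (hp g) j (r g)).symm
  · rintro _ ⟨q, rfl⟩
    rw [sumMulForms_apply]
    refine ⟨Ideal.sum_mem _ fun g _ => Ideal.mul_mem_left _ _ (Ideal.subset_span ⟨g, rfl⟩),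
      Submodule.sum_mem _ fun g _ => (q g).2.mul (hp g)⟩

end MvPolynomial

theorem powerIdeal1_eq_span (k d : ℕ) (ξ : ℂ) :
    powerIdeal1 k d ξ =
      Ideal.span (Set.range fun g : Fin k => (X 0 + C (ξ ^ (g : ℕ)) * X 1) ^ ((k - 1) * d)) := by
  rw [powerIdeal1]
  congr 1
  ext p
  exact ⟨fun ⟨g, hg, hp⟩ => ⟨⟨g, hg⟩, hp.symm⟩, fun ⟨g, hp⟩ => ⟨g, g.2, hp.symm⟩⟩

theorem finrank_powerIdeal1_inf_homogeneousSubmodule {k d j : ℕ} [NeZero k] {ξ : ℂ}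
    (hξ : IsPrimitiveRoot ξ k) (hjd : j + 1 ≤ d) :
    finrank ℂ ↥((powerIdeal1 k d ξ).restrictScalars ℂ ⊓
      homogeneousSubmodule (Fin 2) ℂ ((k - 1) * d + j)) = k * (j + 1) := by
  set L : Fin k → MvPolynomial (Fin 2) ℂ := fun g => (X 0 + C (ξ ^ (g : ℕ)) * X 1) ^ ((k - 1) * d)
  have hL : ∀ g, (L g).IsHomogeneous ((k - 1) * d) := fun g => by
    simpa using ((isHomogeneous_X ℂ 0).add (isHomogeneous_C_mul_X _ 1)).pow ((k - 1) * d)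
  rw [powerIdeal1_eq_span, add_comm, span_inf_homogeneousSubmodule hL]
  refine le_antisymm ((LinearMap.finrank_range_le _).trans ?_) ?_
  · simp [Module.finrank_pi_fintype, finrank_homogeneousSubmodule_fin_two]
  set v : Fin k × Fin (j + 1) → ℂ[X] := fun p =>
    Polynomial.X ^ (p.2 : ℕ) * (Polynomial.X + Polynomial.C (ξ ^ (p.1 : ℕ))) ^ ((k - 1) * d)
  have hv : LinearIndependent ℂ v := by
    refine Polynomial.linearIndependent_X_pow_mul_X_add_C_pow
      (fun a b hab => Fin.ext (hξ.pow_inj a.2 b.2 hab))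
      (fun g => pow_ne_zero _ (hξ.ne_zero (NeZero.ne k))) ?_
    rw [Fintype.card_fin]
    nlinarith [Nat.mul_le_mul_left (k - 1) hjd, Nat.sub_add_cancel (NeZero.one_le (n := k))]
  set φ := (aeval (R := ℂ) ![(Polynomial.X : ℂ[X]), 1]).toLinearMap
  calc k * (j + 1) = finrank ℂ (Submodule.span ℂ (Set.range v)) := by
        rw [finrank_span_eq_card hv, Fintype.card_prod, Fintype.card_fin, Fintype.card_fin]
    _ ≤ finrank ℂ (Submodule.map φ (LinearMap.range (sumMulForms L j))) := by
        refine Submodule.finrank_mono (Submodule.span_le.2 ?_)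
        rintro _ ⟨⟨g, a⟩, rfl⟩
        refine ⟨sumMulForms L j (Pi.single g ⟨X 0 ^ (a : ℕ) * X 1 ^ (j - a), ?_⟩), ⟨_, rfl⟩, ?_⟩
        · have := (isHomogeneous_X_pow (R := ℂ) (0 : Fin 2) (a : ℕ)).mul
            (isHomogeneous_X_pow 1 (j - a))
          rwa [Nat.add_sub_cancel' (Nat.lt_succ_iff.1 a.2)] at this
        · rw [sumMulForms_single]
          simp [φ, L, v]
    _ ≤ _ := Submodule.finrank_map_le _ _

theorem wt_eq (k : ℕ) (g : Fin 2 → ZMod k) : wt g = (g 0).val + (g 1).val := Fin.sum_univ_two _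

theorem Nw_eq_min (k h : ℕ) [NeZero k] : Nw k h = min (h + 1) (2 * k - 1 - h) := by
  have hcard : Nw k h = ((Finset.range k).filter fun a => a ≤ h ∧ h - a < k).card := by
    refine Finset.card_nbij' (fun g => (g 0).val) (fun a => ![(a : ZMod k), ((h - a : ℕ) : ZMod k)])
      ?_ ?_ ?_ ?_ <;> intro x hx <;>
      simp only [Finset.mem_coe, Finset.mem_filter, Finset.mem_univ, Finset.mem_range, true_and,
        wt_eq] at hx ⊢
    · have := (x 1).val_lt
      exact ⟨(x 0).val_lt, by omega, by omega⟩
    · simp [ZMod.val_cast_of_lt hx.1, ZMod.val_cast_of_lt hx.2.2]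
      omega
    · ext i
      fin_cases i
      · simp
      · simp [show h - (x 0).val = (x 1).val by omega]
    · simp [ZMod.val_cast_of_lt hx.1]
  have hIcc : ((Finset.range k).filter fun a => a ≤ h ∧ h - a < k) =
      Finset.Icc (h + 1 - k) (min h (k - 1)) := by
    ext a
    simp only [Finset.mem_filter, Finset.mem_range, Finset.mem_Icc]
    omega
  rw [hcard, hIcc, Nat.card_Icc]
  omega

theorem sum_Nw_mul_div (k A : ℕ) [NeZero k] :
    ∑ h ∈ (Finset.range A).filter (fun h => k ∣ A - h), Nw k h * ((A - h) / k) = A + 1 - k := by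
  have hk := NeZero.pos k
  set r := A % k
  set q := A / k
  have hA : r + k * q = A := Nat.mod_add_div A k
  have hr : r < k := Nat.mod_lt A hk
  have hNw_r : Nw k r = r + 1 := by rw [Nw_eq_min]; omega
  have hNw_rk : Nw k (r + k) = k - 1 - r := by rw [Nw_eq_min]; omega
  set F := fun h => Nw k h * ((A - h) / k)
  have hF_r : F r = (r + 1) * q := by
    simp only [F, hNw_r, ← hA, Nat.add_sub_cancel_left, Nat.mul_div_cancel_left _ hk]
  have hF_rk : F (r + k) = (k - 1 - r) * (q - 1) := by
    simp only [F, hNw_rk]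
    rw [show A - (r + k) = k * (q - 1) by rw [Nat.mul_sub_one]; omega, Nat.mul_div_cancel_left _ hk]
  -- every `h ≡ A (mod k)` other than `r` and `r + k` is at least `2 k`, where `Nw k h = 0`
  have hsupp : ∀ h ∈ (Finset.range A).filter (fun h => k ∣ A - h),
      h ∉ ({r, r + k} : Finset ℕ) → F h = 0 := by
    intro h hh hrk
    simp only [Finset.mem_filter, Finset.mem_range] at hh
    simp only [Finset.mem_insert, Finset.mem_singleton, not_or] at hrk
    have hmod : h % k = r := (Nat.modEq_iff_dvd' hh.1.le).2 hh.2
    have h2 : 2 ≤ h / k := by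
      have := Nat.mod_add_div h k
      by_contra! hlt
      interval_cases h / k <;> omega
    have : 2 * k ≤ h := by nlinarith [Nat.mod_add_div h k]
    simp only [F, Nw_eq_min, show 2 * k - 1 - h = 0 by omega, Nat.min_zero, zero_mul]
  have hpair : ∀ h ∈ ({r, r + k} : Finset ℕ),
      h ∉ (Finset.range A).filter (fun h => k ∣ A - h) → F h = 0 := by
    intro h hh hn
    have hdvd : k ∣ A - h := by
      simp only [Finset.mem_insert, Finset.mem_singleton] at hh
      rcases hh with rfl | rfl
      · exact ⟨q, by omega⟩
      · exact ⟨q - 1, by rw [Nat.mul_sub_one]; omega⟩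
    simp only [Finset.mem_filter, Finset.mem_range, hdvd, and_true, not_lt] at hn
    simp [F, Nat.sub_eq_zero_of_le hn]
  calc _ = ∑ h ∈ (Finset.range A).filter (fun h => k ∣ A - h) ∪ {r, r + k}, F h :=
        Finset.sum_subset Finset.subset_union_left fun h hh hn =>
          hpair h ((Finset.mem_union.1 hh).resolve_left hn) hn
    _ = ∑ h ∈ ({r, r + k} : Finset ℕ), F h :=
        (Finset.sum_subset Finset.subset_union_right fun h hh hn =>
          hsupp h ((Finset.mem_union.1 hh).resolve_right hn) hn).symm
    _ = (r + 1) * q + (k - 1 - r) * (q - 1) := by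
        rw [Finset.sum_pair (by omega), hF_r, hF_rk]
    _ = A + 1 - k := by
        rw [← hA]
        rcases Nat.eq_zero_or_pos q with hq | hq
        · simp [hq]
          omega
        · obtain ⟨s, hs⟩ : ∃ s, k = r + 1 + s := ⟨k - 1 - r, by omega⟩
          obtain ⟨t, ht⟩ : ∃ t, q = t + 1 := ⟨q - 1, by omega⟩
          rw [show k - 1 - r = s by omega, ht, Nat.add_sub_cancel, hs]
          refine (Nat.sub_eq_of_eq_add ?_).symm
          ring

open scoped Classical in
theorem sum_Nw_mul_choose_sub_choose (k A j : ℕ) [NeZero k] :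
    ∑ h ∈ (Finset.range A).filter (fun h => ∃ m : ℕ, A + k * j = h + k * m),
      Nw k h * ((1 + (A + k * j - h) / k).choose 1 - (1 + j).choose 1) = A + 1 - k := by
  rw [← sum_Nw_mul_div]
  refine Finset.sum_congr (Finset.filter_congr fun h hh => ?_) fun h hh => ?_
  · have hhA := Finset.mem_range.1 hh
    constructor
    · rintro ⟨m, hm⟩
      exact ⟨m - j, by rw [Nat.mul_sub]; omega⟩
    · rintro ⟨c, hc⟩
      exact ⟨c + j, by rw [Nat.mul_add]; omega⟩
  · have hhA := Finset.mem_range.1 (Finset.mem_filter.1 hh).1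
    rw [show A + k * j - h = A - h + k * j by omega, Nat.add_mul_div_left _ _ (NeZero.pos k),
      Nat.choose_one_right, Nat.choose_one_right, Nat.add_sub_add_left, Nat.add_sub_cancel]

open scoped Classical in
theorem stmt19_general (k d : ℕ) [NeZero k] (hd : 2 ≤ d)
    (ξ : ℂ) (hξ : IsPrimitiveRoot ξ k) :
    ∀ j ≤ d - 2,
      HF1 k d ξ ((k-1)*d + j) = 1 + (k-1)*(d-j) - k ∧
      HF1 k d ξ ((k-1)*d + j)
        = ∑ h ∈ (Finset.range ((k-1)*(d-j))).filter
            (fun h => ∃ m : ℕ, (k-1)*d + j = h + k * m),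
          Nw k h * ((1 + ((k-1)*d + j - h)/k).choose 1 - (1 + j).choose 1) := by
  intro j hj
  have hjd : j + 1 ≤ d := by omega
  have hk := NeZero.pos k
  have hi : (k - 1) * d + j = (k - 1) * (d - j) + k * j := by
    zify [hk, hjd.trans' (Nat.le_succ j)]
    ring
  have hHF : HF1 k d ξ ((k - 1) * d + j) = (k - 1) * (d - j) + 1 - k := by
    rw [HF1, finrank_homogeneousSubmodule_fin_two,
      finrank_powerIdeal1_inf_homogeneousSubmodule hξ hjd, hi, Nat.mul_succ]
    omega
  rw [hHF, hi, sum_Nw_mul_choose_sub_choose]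
  exact ⟨by rw [add_comm 1], rfl⟩

open scoped Classical in
theorem stmt19 (k d : ℕ) [NeZero k] (hk : 2 ≤ k) (hd : 2 ≤ d)
    (ξ : ℂ) (hξ : IsPrimitiveRoot ξ k) :
    ∀ j ≤ d - 2,
      HF1 k d ξ ((k-1)*d + j) = 1 + (k-1)*(d-j) - k ∧
      HF1 k d ξ ((k-1)*d + j)
        = ∑ h ∈ (Finset.range ((k-1)*(d-j))).filter
            (fun h => ∃ m : ℕ, (k-1)*d + j = h + k * m),
          Nw k h * ((1 + ((k-1)*d + j - h)/k).choose 1 - (1 + j).choose 1) :=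
  stmt19_general k d hd ξ hξ
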